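/- Let K ⊆ ℝ^d be a closed convex set, let C be a convex set, and let h = {x : f x = c} be a hyperplane with f linear and nonzero. Set C₁ = {x ∈ C : f x < c}, C₂ = {x ∈ C : f x > c}, and F = C ∩ h. If F ∩ K = ∅, then it is not possible that both C₁ ∩ frontier K ≠ ∅ and C₂ ∩ frontier K ≠ ∅. -/

import Mathlib

open Set

section

variable {𝕜 E : Type*} [Field 𝕜] [LinearOrder 𝕜] [IsStrictOrderedRing 𝕜]
  [AddCommGroup E] [Module 𝕜 E]

theorem exists_mem_segment_apply_eq (f : E →ₗ[𝕜] 𝕜) {x y : E} {c : 𝕜}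
    (hx : f x ≤ c) (hy : c ≤ f y) : ∃ z ∈ segment 𝕜 x y, f z = c := by
  have hc : c ∈ f.toAffineMap '' segment 𝕜 x y := by
    rw [image_segment]
    exact Icc_subset_segment ⟨hx, hy⟩
  simpa using hc

theorem Convex.exists_mem_apply_eq {S : Set E} (hS : Convex 𝕜 S) (f : E →ₗ[𝕜] 𝕜)
    {x y : E} {c : 𝕜} (hxS : x ∈ S) (hyS : y ∈ S) (hx : f x ≤ c) (hy : c ≤ f y) :
    ∃ z ∈ S, f z = c :=
  let ⟨z, hz, hfz⟩ := exists_mem_segment_apply_eq f hx hy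
  ⟨z, hS.segment_subset hxS hyS hz, hfz⟩

end

theorem facet_claim_general {d : ℕ}
    (K C : Set (EuclideanSpace ℝ (Fin d)))
    (hKconv : Convex ℝ K) (hKclosed : IsClosed K)
    (hCconv : Convex ℝ C)
    (f : EuclideanSpace ℝ (Fin d) →ₗ[ℝ] ℝ) (c : ℝ)
    (C₁ C₂ F : Set (EuclideanSpace ℝ (Fin d)))
    (hC₁ : C₁ = {x ∈ C | f x < c})
    (hC₂ : C₂ = {x ∈ C | c < f x})
    (hF : F = C ∩ {x | f x = c})
    (hFK : F ∩ K = ∅) :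
    ¬ ((C₁ ∩ frontier K).Nonempty ∧ (C₂ ∩ frontier K).Nonempty) := by
  subst hC₁ hC₂ hF
  rintro ⟨⟨x, ⟨hxC, hxc⟩, hxK⟩, ⟨y, ⟨hyC, hyc⟩, hyK⟩⟩
  obtain ⟨z, ⟨hzC, hzK⟩, hfz⟩ := (hCconv.inter hKconv).exists_mem_apply_eq f
    ⟨hxC, hKclosed.frontier_subset hxK⟩ ⟨hyC, hKclosed.frontier_subset hyK⟩ hxc.le hyc.le
  exact hFK.subset ⟨⟨hzC, hfz⟩, hzK⟩

theorem facet_claim {d : ℕ}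
    (K C : Set (EuclideanSpace ℝ (Fin d)))
    (hKconv : Convex ℝ K) (hKclosed : IsClosed K)
    (hCconv : Convex ℝ C)
    (f : EuclideanSpace ℝ (Fin d) →ₗ[ℝ] ℝ) (hf : f ≠ 0) (c : ℝ)
    (C₁ C₂ F : Set (EuclideanSpace ℝ (Fin d)))
    (hC₁ : C₁ = {x ∈ C | f x < c})
    (hC₂ : C₂ = {x ∈ C | c < f x})
    (hF : F = C ∩ {x | f x = c})
    (hFK : F ∩ K = ∅) :
    ¬ ((C₁ ∩ frontier K).Nonempty ∧ (C₂ ∩ frontier K).Nonempty) :=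
  facet_claim_general K C hKconv hKclosed hCconv f c C₁ C₂ F hC₁ hC₂ hF hFK
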